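/- Let G be a topological group (not necessarily abelian) and H a closed normal subgroup such that both H and G/H are P-groups. Then G is a P-group. -/

import Mathlib

open Pointwise Function

noncomputable section

/-- The canonical evaluation homomorphism of a topological abelian group into its
Pontryagin bidual, `x ↦ (χ ↦ χ x)`. -/
noncomputable def pontryaginEval (G : Type*) [CommGroup G] [TopologicalSpace G]
    [IsTopologicalGroup G] : G →* PontryaginDual (PontryaginDual G) where
  toFun x :=
    { toFun := fun χ => χ x
      map_one' := rfl
      map_mul' := fun _ _ => rfl
      continuous_toFun :=
        (continuous_eval_const (F := ContinuousMonoidHom G Circle) x :) }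
  map_one' := ContinuousMonoidHom.ext fun χ => map_one χ
  map_mul' x y := ContinuousMonoidHom.ext fun χ => map_mul χ x y

/-- A topological group is protodiscrete (linear) if open subgroups form a
neighborhood base at the identity. -/
def Protodiscrete (G : Type*) [Group G] [TopologicalSpace G] : Prop :=
  ∀ U ∈ nhds (1 : G), ∃ V : Subgroup G, IsOpen (V : Set G) ∧ (V : Set G) ⊆ U

/-- A topological group is precompact (totally bounded) if every neighborhood of the
identity has finitely many translates covering the group. -/
def Precompact (G : Type*) [Group G] [TopologicalSpace G] : Prop :=
  ∀ U ∈ nhds (1 : G), ∃ F : Finset G, ∀ x : G, ∃ f ∈ F, x ∈ f • U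

/-- A topological abelian group is (Pontryagin) reflexive if the canonical evaluation
map into its bidual is a topological isomorphism. -/
def PontryaginReflexive (G : Type*) [CommGroup G] [TopologicalSpace G]
    [IsTopologicalGroup G] : Prop :=
  IsHomeomorph (pontryaginEval G)

/-- A subgroup is dually embedded if every continuous character of it extends to a
continuous character of the ambient group. -/
def DuallyEmbedded {G : Type*} [CommGroup G] [TopologicalSpace G] [IsTopologicalGroup G]
    (L : Subgroup G) : Prop :=
  ∀ χ : PontryaginDual L, ∃ ψ : PontryaginDual G, ∀ x : L, ψ (x : G) = χ x

/-- The annihilator of a subset `K` of `G` in the dual group. -/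
def annihilator {G : Type*} [CommGroup G] [TopologicalSpace G] [IsTopologicalGroup G]
    (K : Set G) : Subgroup (PontryaginDual G) where
  carrier := {χ | ∀ x ∈ K, χ x = 1}
  one_mem' := fun x _ => rfl
  mul_mem' := by
    intro a b ha hb x hx
    show a x * b x = 1
    rw [ha x hx, hb x hx, one_mul]
  inv_mem' := by
    intro a ha x hx
    show (a x)⁻¹ = 1
    rw [ha x hx, inv_one]

/-- A `P`-space: every countable intersection of open sets is open. -/
def IsPSpace (X : Type*) [TopologicalSpace X] : Prop :=
  ∀ s : ℕ → Set X, (∀ n, IsOpen (s n)) → IsOpen (⋂ n, s n)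

/-- A set is `Gδ`-dense if it meets every nonempty `Gδ`-set. -/
def GdeltaDense {X : Type*} [TopologicalSpace X] (s : Set X) : Prop :=
  ∀ t : ℕ → Set X, (∀ n, IsOpen (t n)) → (⋂ n, t n).Nonempty → (s ∩ ⋂ n, t n).Nonempty

/-- The graph of a homomorphism, as a subgroup of the product. -/
def graphSubgroup {H₁ H₂ : Type*} [CommGroup H₁] [CommGroup H₂] (φ : H₁ →* H₂) :
    Subgroup (H₁ × H₂) where
  carrier := {p | p.2 = φ p.1}
  one_mem' := (map_one φ).symm
  mul_mem' := by
    rintro ⟨a, b⟩ ⟨c, d⟩ hb hd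
    simp only [Set.mem_setOf_eq] at *
    simp [hb, hd]
  inv_mem' := by
    rintro ⟨a, b⟩ h
    simp only [Set.mem_setOf_eq] at *
    simp [h]

/-- The Σ-product of `D` copies of the circle group inside `𝕋^D`. -/
def sigmaProd (D : Type*) : Subgroup (D → Circle) where
  carrier := {x | {d | x d ≠ 1}.Countable}
  one_mem' := by simp
  mul_mem' := by
    intro a b ha hb
    refine Set.Countable.mono ?_ (ha.union hb)
    intro d hd
    simp only [Set.mem_union, Set.mem_setOf_eq]
    by_contra h
    push_neg at h
    exact hd (by show a d * b d = 1; rw [h.1, h.2, one_mul])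
  inv_mem' := by
    intro a ha
    refine Set.Countable.mono ?_ ha
    intro d hd
    simp only [Set.mem_setOf_eq] at *
    simpa [inv_eq_one] using hd

/-- The group of continuous `Circle`-valued functions on `Y`, as a subgroup of the
product `Y → Circle`; the subspace topology is the topology of pointwise convergence. -/
def Cp (Y : Type*) [TopologicalSpace Y] : Subgroup (Y → Circle) where
  carrier := {f | Continuous f}
  one_mem' := continuous_const
  mul_mem' := fun hf hg => hf.mul hg
  inv_mem' := fun hf => hf.inv

/-- The one-point Lindelöfication of a discrete set `D`: the point `none` has the
co-countable sets as neighborhoods, all other points are isolated. -/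
def Lind (D : Type*) := Option D

instance (D : Type*) : TopologicalSpace (Lind D) where
  IsOpen U := (none : Option D) ∈ U → {d : D | (some d : Option D) ∉ U}.Countable
  isOpen_univ := by
    intro _
    exact Set.countable_empty.mono (fun d hd =>
      (hd : (some d : Option D) ∉ (Set.univ : Set (Lind D))) trivial)
  isOpen_inter := by
    intro U V hU hV h
    refine Set.Countable.mono ?_ ((hU h.1).union (hV h.2))
    intro d hd
    simp only [Set.mem_union, Set.mem_setOf_eq] at *
    by_contra hc
    push_neg at hc
    exact hd ⟨hc.1, hc.2⟩
  isOpen_sUnion := by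
    intro S hS h
    obtain ⟨U, hUS, hU⟩ := h
    refine Set.Countable.mono ?_ (hS U hUS hU)
    intro d hd
    simp only [Set.mem_setOf_eq] at *
    exact fun hdU => hd ⟨U, hUS, hdU⟩

end

/-!
Let `Uₙ` be neighborhoods of `1` and pick neighborhoods `Vₙ` of `1` with `Vₙ * Vₙ ⊆ Uₙ`. Since `H`
is a `P`-space, some neighborhood `O` of `1` satisfies `O ∩ H ⊆ ⋂ Vₙ`; take a symmetric
neighborhood `W` of `1` with `W * W ⊆ O`. Since `G ⧸ H` is a `P`-space and `G → G ⧸ H` is open,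
the images of the `W ∩ Vₙ` have a common neighborhood `T` of the base point. If `x ∈ W` lies over
`T`, then for each `n` some `w ∈ W ∩ Vₙ` lies in the coset `x H`, so `w⁻¹ * x ∈ W * W ∩ H ⊆ Vₙ`
and `x = w * (w⁻¹ * x) ∈ Vₙ * Vₙ ⊆ Uₙ`.
-/

open Filter Set Topology

theorem IsPSpace.iInter_mem_nhds {X : Type*} [TopologicalSpace X] (hX : IsPSpace X) {x : X}
    {s : ℕ → Set X} (hs : ∀ n, s n ∈ 𝓝 x) : ⋂ n, s n ∈ 𝓝 x :=
  mem_of_superset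
    ((hX _ fun _ => isOpen_interior).mem_nhds
      (mem_iInter.2 fun n => mem_interior_iff_mem_nhds.2 (hs n)))
    (iInter_mono fun _ => interior_subset)

section TopologicalGroup

variable {G : Type*} [Group G] [TopologicalSpace G] [IsTopologicalGroup G]

theorem isPSpace_of_iInter_mem_nhds_one
    (h : ∀ U : ℕ → Set G, (∀ n, U n ∈ 𝓝 1) → ⋂ n, U n ∈ 𝓝 1) : IsPSpace G := by
  intro s hs
  refine isOpen_iff_mem_nhds.2 fun x hx => ?_
  rw [← map_mul_left_nhds_one, mem_map, preimage_iInter]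
  exact h _ fun n =>
    ((hs n).preimage (continuous_const_mul x)).mem_nhds (by simpa using mem_iInter.1 hx n)

theorem iInter_mem_nhds_one_of_isPSpace_subgroup_of_isPSpace_quotient {H : Subgroup G}
    (hH : IsPSpace H) (hGH : IsPSpace (G ⧸ H)) {U : ℕ → Set G} (hU : ∀ n, U n ∈ 𝓝 1) :
    ⋂ n, U n ∈ 𝓝 1 := by
  choose V hV hVU using fun n => exists_nhds_one_split (hU n)
  have hVH : ⋂ n, ((↑) : H → G) ⁻¹' V n ∈ 𝓝 (1 : H) :=
    hH.iInter_mem_nhds fun n => continuous_subtype_val.continuousAt.preimage_mem_nhds (hV n)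
  obtain ⟨O, hO, hOV⟩ := (mem_nhds_subtype _ _ _).1 hVH
  obtain ⟨W, hW, -, hWinv, hWO⟩ := exists_closed_nhds_one_inv_eq_mul_subset hO
  have hT : ⋂ n, ((↑) '' (W ∩ V n) : Set (G ⧸ H)) ∈ 𝓝 ((1 : G) : G ⧸ H) :=
    hGH.iInter_mem_nhds fun n =>
      QuotientGroup.isOpenMap_coe.image_mem_nhds (inter_mem hW (hV n))
  filter_upwards [QuotientGroup.continuous_mk.continuousAt.preimage_mem_nhds hT, hW]
    with x hxT hxW
  refine mem_iInter.2 fun n => ?_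
  obtain ⟨w, ⟨hwW, hwV⟩, hwx⟩ := mem_iInter.1 hxT n
  have hwxH : w⁻¹ * x ∈ H := QuotientGroup.eq.1 hwx
  have hwxO : w⁻¹ * x ∈ O :=
    hWO (mul_mem_mul (hWinv ▸ inv_mem_inv.2 hwW) hxW)
  have hwxV : w⁻¹ * x ∈ V n := mem_iInter.1 (@hOV ⟨_, hwxH⟩ hwxO) n
  simpa using hVU n w hwV _ hwxV

end TopologicalGroup

theorem statement9_general (G : Type*) [Group G] [TopologicalSpace G] [IsTopologicalGroup G]
    (H : Subgroup G)
    (h1 : IsPSpace H) (h2 : IsPSpace (G ⧸ H)) :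
    IsPSpace G :=
  isPSpace_of_iInter_mem_nhds_one fun _ =>
    iInter_mem_nhds_one_of_isPSpace_subgroup_of_isPSpace_quotient h1 h2

/-- if `H` is a closed normal subgroup of `G` and both `H` and `G/H` are
P-groups, then `G` is a P-group. -/
theorem statement9 (G : Type*) [Group G] [TopologicalSpace G] [IsTopologicalGroup G]
    (H : Subgroup G) [H.Normal] (hH : IsClosed (H : Set G))
    (h1 : IsPSpace H) (h2 : IsPSpace (G ⧸ H)) :
    IsPSpace G :=
  statement9_general G H h1 h2
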